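/- arXiv:1702.03956 — 5 statements merged into one kernel-verified Lean document; each statement's English description precedes it below -/
import Mathlib

section
/- Suppose T is the complete balanced binary tree of depth n (vertices are binary strings of length ≤ n), and each vertex is labeled by an element of ℤ with all labels ≥ -1, such that for every internal vertex labeled x with children labeled y and z: max(y,z) ≤ x, and if x ≥ 0 then min(y,z) < x. If the root's label is at most k (with k ≥ 0), then the number of leaves with nonnegative label is at most φ(n,k) = ∑_{i=0}^{k} C(n,i). -/
/-!
Induct on the depth. If the root label is negative, every label is, and no leaf counts. Otherwise
some child `b` has a label strictly below the root's, hence at most `k - 1`, while the other child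
has label at most `k`; by induction the two subtrees contribute at most `phi n (k - 1)` and
`phi n k` leaves, which is Pascal's rule `phi (n + 1) k = phi n (k - 1) + phi n k`. When `k = 0`
the child `b` is negative and contributes nothing, and `phi n 0 = 1` for every `n`.
-/

def phi (n k : ℕ) : ℕ := ∑ i ∈ Finset.range (k + 1), n.choose i

theorem phi_zero_right (n : ℕ) : phi n 0 = 1 := by
  simp [phi]

theorem phi_succ_succ (n k : ℕ) : phi (n + 1) (k + 1) = phi n k + phi n (k + 1) := by
  simp only [phi, Finset.sum_range_succ' _ (k + 1), Nat.choose_succ_succ',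
    Finset.sum_add_distrib, Nat.choose_zero_right]
  ring

def TreeLabelAntitone (n : ℕ) (lab : List Bool → ℤ) : Prop :=
  ∀ u : List Bool, u.length < n → max (lab (u ++ [false])) (lab (u ++ [true])) ≤ lab u

def TreeLabelDrops (n : ℕ) (lab : List Bool → ℤ) : Prop :=
  ∀ u : List Bool, u.length < n → 0 ≤ lab u →
    min (lab (u ++ [false])) (lab (u ++ [true])) < lab u

noncomputable def nonnegLeafCount (n : ℕ) (lab : List Bool → ℤ) : ℕ :=
  Nat.card {v : Fin n → Bool // 0 ≤ lab (List.ofFn v)}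

namespace TreeLabelAntitone

variable {n : ℕ} {lab : List Bool → ℤ}

theorem cons (h : TreeLabelAntitone (n + 1) lab) (b : Bool) :
    TreeLabelAntitone n (lab ∘ List.cons b) := fun u hu => by
  simpa using h (b :: u) (by simpa using hu)

theorem child_le (h : TreeLabelAntitone (n + 1) lab) (b : Bool) : lab [b] ≤ lab [] := by
  have := h [] (Nat.succ_pos n)
  cases b <;> simp_all

theorem le_root (h : TreeLabelAntitone n lab) {l : List Bool} (hl : l.length ≤ n) :
    lab l ≤ lab [] := by
  induction l using List.reverseRecOn with
  | nil => exact le_rfl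
  | append_singleton u b ih =>
    have hu : u.length < n := by simp at hl; omega
    have hchild : lab (u ++ [b]) ≤ lab u := by
      cases b
      · exact (le_max_left _ _).trans (h u hu)
      · exact (le_max_right _ _).trans (h u hu)
    exact hchild.trans (ih hu.le)

theorem nonnegLeafCount_eq_zero (h : TreeLabelAntitone n lab) (hroot : lab [] < 0) :
    nonnegLeafCount n lab = 0 := by
  refine Nat.card_eq_zero.2 (Or.inl ⟨fun ⟨v, hv⟩ => ?_⟩)
  have := h.le_root (l := List.ofFn v) (by simp)
  omega

end TreeLabelAntitone

namespace TreeLabelDrops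

variable {n : ℕ} {lab : List Bool → ℤ}

theorem cons (h : TreeLabelDrops (n + 1) lab) (b : Bool) :
    TreeLabelDrops n (lab ∘ List.cons b) := fun u hu h0 => by
  simpa using h (b :: u) (by simpa using hu) h0

theorem exists_child_lt (h : TreeLabelDrops (n + 1) lab) (hroot : 0 ≤ lab []) :
    ∃ b, lab [b] < lab [] := by
  have := h [] (Nat.succ_pos n) hroot
  rcases min_lt_iff.1 this with h' | h'
  · exact ⟨false, h'⟩
  · exact ⟨true, h'⟩

end TreeLabelDrops

theorem nonnegLeafCount_succ (n : ℕ) (lab : List Bool → ℤ) (b : Bool) :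
    nonnegLeafCount (n + 1) lab =
      nonnegLeafCount n (lab ∘ List.cons b) + nonnegLeafCount n (lab ∘ List.cons !b) := by
  classical
  have e : {v : Fin (n + 1) → Bool // 0 ≤ lab (List.ofFn v)} ≃
      Σ c : Bool, {w : Fin n → Bool // 0 ≤ lab (c :: List.ofFn w)} :=
    ((Fin.consEquiv fun _ => Bool).symm.subtypeEquiv fun v => by
      rw [List.ofFn_succ]; rfl).trans
      (Equiv.subtypeProdEquivSigmaSubtype fun c w => 0 ≤ lab (c :: List.ofFn w))
  simp only [nonnegLeafCount, Nat.card_congr e, Nat.card_eq_fintype_card, Fintype.card_sigma,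
    Fintype.sum_bool, Function.comp_apply]
  cases b
  · exact add_comm _ _
  · rfl

theorem nonnegLeafCount_le_phi (n k : ℕ) (lab : List Bool → ℤ) (hmax : TreeLabelAntitone n lab)
    (hmin : TreeLabelDrops n lab) (hroot : lab [] ≤ k) : nonnegLeafCount n lab ≤ phi n k := by
  induction n generalizing k lab with
  | zero =>
    calc nonnegLeafCount 0 lab ≤ Nat.card (Fin 0 → Bool) :=
          Nat.card_le_card_of_injective _ Subtype.val_injective
      _ = phi 0 0 := by simp [phi]
      _ ≤ phi 0 k := Finset.sum_le_sum_of_subset (by simp)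
  | succ n ih =>
    rcases lt_or_ge (lab []) 0 with hneg | hnonneg
    · simp [hmax.nonnegLeafCount_eq_zero hneg]
    obtain ⟨b, hb⟩ := hmin.exists_child_lt hnonneg
    have hother : (lab ∘ List.cons !b) [] ≤ k := (hmax.child_le !b).trans hroot
    rw [nonnegLeafCount_succ n lab b]
    cases k with
    | zero =>
      have hb_neg : (lab ∘ List.cons b) [] < 0 := by simp only [Function.comp_apply]; omega
      rw [(hmax.cons b).nonnegLeafCount_eq_zero hb_neg, zero_add, phi_zero_right,
        ← phi_zero_right n]
      exact ih 0 _ (hmax.cons !b) (hmin.cons !b) hother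
    | succ k =>
      have hb_le : (lab ∘ List.cons b) [] ≤ k := by simp only [Function.comp_apply]; omega
      rw [phi_succ_succ]
      exact add_le_add (ih k _ (hmax.cons b) (hmin.cons b) hb_le)
        (ih (k + 1) _ (hmax.cons !b) (hmin.cons !b) hother)

theorem integer_labeled_tree_bound_general (n : ℕ) (k : ℕ) (lab : List Bool → ℤ)
    (hmax : ∀ u : List Bool, u.length < n →
      max (lab (u ++ [false])) (lab (u ++ [true])) ≤ lab u)
    (hmin : ∀ u : List Bool, u.length < n → 0 ≤ lab u →
      min (lab (u ++ [false])) (lab (u ++ [true])) < lab u)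
    (hroot : lab [] ≤ (k : ℤ)) :
    Nat.card {v : Fin n → Bool // 0 ≤ lab (List.ofFn v)} ≤ phi n k :=
  nonnegLeafCount_le_phi n k lab hmax hmin hroot

/-- Lemma: in a complete balanced binary tree of depth `n` (vertices are binary
strings of length ≤ n) labeled by integers ≥ -1, such that children's labels
are at most the parent's, and if the parent's label is nonnegative then some
child's label is strictly smaller, and the root's label is at most `k ≥ 0`,
the number of leaves with nonnegative label is at most `phi n k`. -/
theorem integer_labeled_tree_bound (n : ℕ) (k : ℕ) (lab : List Bool → ℤ)
    (hge : ∀ v : List Bool, v.length ≤ n → -1 ≤ lab v)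
    (hmax : ∀ u : List Bool, u.length < n →
      max (lab (u ++ [false])) (lab (u ++ [true])) ≤ lab u)
    (hmin : ∀ u : List Bool, u.length < n → 0 ≤ lab u →
      min (lab (u ++ [false])) (lab (u ++ [true])) < lab u)
    (hroot : lab [] ≤ (k : ℤ)) :
    Nat.card {v : Fin n → Bool // 0 ≤ lab (List.ofFn v)} ≤ phi n k :=
  integer_labeled_tree_bound_general n k lab hmax hmin hroot
end

section
/- Let X be a set and 𝓖 ⊆ 2^X nonempty. For y ∈ X define 𝓖_y = {F ∈ 𝓖 : y ∈ F} and 𝓖_ȳ = {F ∈ 𝓖 : y ∉ F}. Then min(dim(X,𝓖_y), dim(X,𝓖_ȳ)) < dim(X,𝓖), where dim denotes thicket dimension (allowing value -1 for the empty family, and where if both restricted dimensions equal dim(X,𝓖) we derive a contradiction; equivalently, at least one of 𝓖_y, 𝓖_ȳ has strictly smaller thicket dimension, provided dim(X,𝓖) is finite). -/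
/-- A leaf `v` (a binary string) of an `X`-labeled tree with labeling `lab` is
realized by `F` if, for every proper prefix `u` of `v`, the label of `u` lies
in `F` iff the bit of `v` following `u` is `false` (left). -/
def RealizedBy {X : Type*} (lab : List Bool → X) (v : List Bool) (F : Set X) : Prop :=
  ∀ i : Fin v.length, (lab (v.take i) ∈ F ↔ v.get i = false)

/-- There is a full `X`-labeled complete balanced binary tree of depth `n` over `𝓕`:
a labeling of strings (internal vertices are those of length `< n`) such that every
leaf (string of length `n`) is realized by some member of `𝓕`. -/
def FullTree {X : Type*} (𝓕 : Set (Set X)) (n : ℕ) : Prop :=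
  ∃ lab : List Bool → X, ∀ v : List Bool, v.length = n → ∃ F ∈ 𝓕, RealizedBy lab v F

/-- The thicket dimension: the supremum of depths of full trees, with value `⊥`
(representing `-1`) for the empty family and `⊤` (representing `ω`) when there
are arbitrarily deep full trees. -/
noncomputable def thicketDim {X : Type*} (𝓕 : Set (Set X)) : WithBot ℕ∞ :=
  sSup {d : WithBot ℕ∞ | ∃ n : ℕ, FullTree 𝓕 n ∧ d = ((n : ℕ∞) : WithBot ℕ∞)}

lemma fullTree_mono {X : Type*} {𝓕 𝓖 : Set (Set X)} (h : 𝓕 ⊆ 𝓖) {n : ℕ}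
    (hf : FullTree 𝓕 n) : FullTree 𝓖 n := by
  obtain ⟨lab, hl⟩ := hf
  exact ⟨lab, fun v hv => (hl v hv).imp fun F ⟨h1, h2⟩ => ⟨h h1, h2⟩⟩

lemma fullTree_anti {X : Type*} {𝓕 : Set (Set X)} {k n : ℕ} (hkn : k ≤ n)
    (hf : FullTree 𝓕 n) : FullTree 𝓕 k := by
  obtain ⟨lab, hl⟩ := hf
  refine ⟨lab, fun v hv => ?_⟩
  obtain ⟨F, hF, hR⟩ := hl (v ++ List.replicate (n - k) false)
    (by simp [hv, Nat.add_sub_cancel' hkn])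
  refine ⟨F, hF, fun i => ?_⟩
  have hi : (i : ℕ) < v.length := i.2
  have h1 : (v ++ List.replicate (n - k) false).take i = v.take i :=
    List.take_append_of_le_length (le_of_lt hi)
  have hi2 : (i : ℕ) < (v ++ List.replicate (n - k) false).length := by
    simp; omega
  have := hR ⟨i, hi2⟩
  rw [h1] at this
  simpa [List.get_eq_getElem, List.getElem_append_left hi] using this

lemma fullTree_combine {X : Type*} {𝓖 : Set (Set X)} {y : X} {n : ℕ}
    (h0 : FullTree {F ∈ 𝓖 | y ∈ F} n) (h1 : FullTree {F ∈ 𝓖 | y ∉ F} n) :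
    FullTree 𝓖 (n + 1) := by
  obtain ⟨lab0, hl0⟩ := h0
  obtain ⟨lab1, hl1⟩ := h1
  refine ⟨fun w => match w with
    | [] => y
    | b :: v => if b then lab1 v else lab0 v, fun w hw => ?_⟩
  match w with
  | [] => simp at hw
  | b :: v =>
    have hv : v.length = n := by simpa using hw
    cases b with
    | false =>
      obtain ⟨F, ⟨hF, hyF⟩, hR⟩ := hl0 v hv
      refine ⟨F, hF, fun i => ?_⟩
      match i with
      | ⟨0, _⟩ => simpa using hyF
      | ⟨j+1, hj⟩ =>
        have hj' : j < v.length := by simpa using hj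
        simpa using hR ⟨j, hj'⟩
    | true =>
      obtain ⟨F, ⟨hF, hyF⟩, hR⟩ := hl1 v hv
      refine ⟨F, hF, fun i => ?_⟩
      match i with
      | ⟨0, _⟩ => simpa using hyF
      | ⟨j+1, hj⟩ =>
        have hj' : j < v.length := by simpa using hj
        simpa using hR ⟨j, hj'⟩

lemma le_thicketDim {X : Type*} {𝓕 : Set (Set X)} {n : ℕ} (hf : FullTree 𝓕 n) :
    ((n : ℕ∞) : WithBot ℕ∞) ≤ thicketDim 𝓕 :=
  le_sSup ⟨n, hf, rfl⟩

lemma thicketDim_le {X : Type*} {𝓕 : Set (Set X)} {c : WithBot ℕ∞}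
    (h : ∀ n, FullTree 𝓕 n → ((n : ℕ∞) : WithBot ℕ∞) ≤ c) : thicketDim 𝓕 ≤ c :=
  sSup_le fun _ ⟨n, hn, hd⟩ => hd ▸ h n hn

lemma thicketDim_mono {X : Type*} {𝓕 𝓖 : Set (Set X)} (h : 𝓕 ⊆ 𝓖) :
    thicketDim 𝓕 ≤ thicketDim 𝓖 :=
  thicketDim_le fun _ hn => le_thicketDim (fullTree_mono h hn)

lemma natCast_le_natCast {n m : ℕ} :
    ((n : ℕ∞) : WithBot ℕ∞) ≤ ((m : ℕ∞) : WithBot ℕ∞) ↔ n ≤ m := by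
  rw [WithBot.coe_le_coe, Nat.cast_le]

lemma thicketDim_attain {X : Type*} {𝓕 : Set (Set X)} {m : ℕ}
    (h : thicketDim 𝓕 = ((m : ℕ∞) : WithBot ℕ∞)) : FullTree 𝓕 m := by
  by_contra hm
  have hlt : ∀ n, FullTree 𝓕 n → n < m := by
    intro n hn
    by_contra hnm
    exact hm (fullTree_anti (le_of_not_gt hnm) hn)
  cases m with
  | zero =>
    have : thicketDim 𝓕 = ⊥ := by
      rw [thicketDim]
      have hs : {d : WithBot ℕ∞ | ∃ n : ℕ, FullTree 𝓕 n ∧ d = ((n : ℕ∞) : WithBot ℕ∞)} = ∅ := by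
        ext d
        simp only [Set.mem_setOf_eq, Set.mem_empty_iff_false, iff_false, not_exists]
        rintro n ⟨hn, -⟩
        exact absurd (hlt n hn) (by omega)
      rw [hs]
      exact sSup_empty
    rw [this] at h
    exact absurd h.symm (by simp)
  | succ k =>
    have : thicketDim 𝓕 ≤ ((k : ℕ∞) : WithBot ℕ∞) :=
      thicketDim_le fun n hn => natCast_le_natCast.mpr (by have := hlt n hn; omega)
    rw [h, natCast_le_natCast] at this
    omega

/-- If `𝓖` is nonempty and has finite thicket dimension, then for any `y ∈ X`,
at least one of `𝓖_y = {F ∈ 𝓖 : y ∈ F}` and `𝓖_ȳ = {F ∈ 𝓖 : y ∉ F}` has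
strictly smaller thicket dimension:
`min(dim(𝓖_y), dim(𝓖_ȳ)) < dim(𝓖)`. -/
theorem min_dim_restrict_lt {X : Type*} (𝓖 : Set (Set X)) (y : X)
    (hne : 𝓖.Nonempty) (hfin : thicketDim 𝓖 < ⊤) :
    min (thicketDim {F ∈ 𝓖 | y ∈ F}) (thicketDim {F ∈ 𝓖 | y ∉ F}) < thicketDim 𝓖 := by
  obtain ⟨G, hG⟩ := hne
  have h0 : FullTree 𝓖 0 := ⟨fun _ => y, fun v hv => ⟨G, hG, fun i => by
    rw [List.length_eq_zero_iff] at hv; subst hv; exact absurd i.2 (by simp)⟩⟩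
  have hbot : thicketDim 𝓖 ≠ ⊥ := by
    intro hb
    have := le_thicketDim h0
    rw [hb, le_bot_iff] at this
    exact absurd this (by simp)
  obtain ⟨a, ha⟩ := WithBot.ne_bot_iff_exists.mp hbot
  have hat : a ≠ ⊤ := by
    rintro rfl
    rw [← ha] at hfin
    exact absurd hfin (lt_irrefl _)
  obtain ⟨m, hm⟩ := WithTop.ne_top_iff_exists.mp hat
  have hd : thicketDim 𝓖 = ((m : ℕ∞) : WithBot ℕ∞) := by rw [← ha, ← hm]; rfl
  by_contra hlt
  push_neg at hlt
  have h1 : thicketDim {F ∈ 𝓖 | y ∈ F} = ((m : ℕ∞) : WithBot ℕ∞) :=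
    le_antisymm (hd ▸ thicketDim_mono (Set.sep_subset _ _))
      (hd ▸ le_trans hlt (min_le_left _ _))
  have h2 : thicketDim {F ∈ 𝓖 | y ∉ F} = ((m : ℕ∞) : WithBot ℕ∞) :=
    le_antisymm (hd ▸ thicketDim_mono (Set.sep_subset _ _))
      (hd ▸ le_trans hlt (min_le_right _ _))
  have hc := fullTree_combine (thicketDim_attain h1) (thicketDim_attain h2)
  have := le_thicketDim hc
  rw [hd, natCast_le_natCast] at this
  omega
end

section
/- If a set system (X,𝓕) has a strict 2^k-ladder, then its thicket dimension is at least k: there exists a full X-labeled complete balanced binary tree of depth k over 𝓕. -/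
section

variable {X : Type*}

theorem realizedBy_nil (lab : List Bool → X) (F : Set X) : RealizedBy lab [] F :=
  fun i => i.elim0

theorem realizedBy_cons_iff {lab : List Bool → X} {b : Bool} {v : List Bool} {F : Set X} :
    RealizedBy lab (b :: v) F ↔
      (lab [] ∈ F ↔ b = false) ∧ RealizedBy (fun u => lab (b :: u)) v F :=
  Fin.forall_fin_succ

theorem FullTree.mono {𝓕 𝓖 : Set (Set X)} {n : ℕ} (h : 𝓕 ⊆ 𝓖) (hT : FullTree 𝓕 n) :
    FullTree 𝓖 n := by
  obtain ⟨lab, hlab⟩ := hT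
  exact ⟨lab, fun v hv => (hlab v hv).imp fun F hF => ⟨h hF.1, hF.2⟩⟩

theorem FullTree.succ {𝓕 : Set (Set X)} {n : ℕ} (a : X)
    (hin : FullTree {F ∈ 𝓕 | a ∈ F} n) (hout : FullTree {F ∈ 𝓕 | a ∉ F} n) :
    FullTree 𝓕 (n + 1) := by
  obtain ⟨labL, hL⟩ := hin
  obtain ⟨labR, hR⟩ := hout
  let lab : List Bool → X := fun
    | [] => a
    | false :: u => labL u
    | true :: u => labR u
  refine ⟨lab, fun v hv => ?_⟩
  obtain _ | ⟨b, v⟩ := v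
  · simp at hv
  have hlen : v.length = n := by simpa using hv
  cases b
  · obtain ⟨F, ⟨hF, haF⟩, hreal⟩ := hL v hlen
    exact ⟨F, hF, realizedBy_cons_iff.2 ⟨by simpa [lab] using haF, hreal⟩⟩
  · obtain ⟨F, ⟨hF, haF⟩, hreal⟩ := hR v hlen
    exact ⟨F, hF, realizedBy_cons_iff.2 ⟨by simpa [lab] using haF, hreal⟩⟩

def IsStrictLadder {ι : Type*} [LT ι] (x : ι → X) (F : ι → Set X) : Prop :=
  ∀ i j, x i ∈ F j ↔ i < j

theorem IsStrictLadder.comp {ι κ : Type*} [LinearOrder ι] [Preorder κ] {x : κ → X}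
    {F : κ → Set X} (hlad : IsStrictLadder x F) {f : ι → κ} (hf : StrictMono f) :
    IsStrictLadder (x ∘ f) (F ∘ f) :=
  fun i j => (hlad (f i) (f j)).trans hf.lt_iff_lt

theorem fullTree_range_of_isStrictLadder :
    ∀ (k : ℕ) {x : Fin (2 ^ k) → X} {F : Fin (2 ^ k) → Set X},
      IsStrictLadder x F → FullTree (Set.range F) k
  | 0, x, F, _ => ⟨fun _ => x 0, fun v hv => ⟨F 0, ⟨0, rfl⟩, by
      rw [List.length_eq_zero_iff.1 hv]; exact realizedBy_nil _ _⟩⟩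
  | k + 1, x, F, hlad => by
    have hk := Nat.two_pow_succ k
    have hpos := Nat.two_pow_pos k
    let lower : Fin (2 ^ k) → Fin (2 ^ (k + 1)) := fun j => ⟨j, by omega⟩
    let upper : Fin (2 ^ k) → Fin (2 ^ (k + 1)) := fun j => ⟨2 ^ k + j, by omega⟩
    let pivot : Fin (2 ^ (k + 1)) := ⟨2 ^ k - 1, by omega⟩
    have hlower : StrictMono lower := fun i j h => h
    have hupper : StrictMono upper := fun i j h => Nat.add_lt_add_left h _
    refine FullTree.succ (x pivot) ?_ ?_
    · refine (fullTree_range_of_isStrictLadder k (hlad.comp hupper)).mono ?_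
      rintro _ ⟨j, rfl⟩
      refine ⟨⟨upper j, rfl⟩, (hlad _ _).2 ?_⟩
      simp only [Fin.lt_def, pivot, upper]
      omega
    · refine (fullTree_range_of_isStrictLadder k (hlad.comp hlower)).mono ?_
      rintro _ ⟨j, rfl⟩
      refine ⟨⟨lower j, rfl⟩, fun h => ?_⟩
      have hj := j.isLt
      have hlt := (hlad _ _).1 h
      simp only [Fin.lt_def, pivot, lower] at hlt
      omega

end

/-- If `(X,𝓕)` has a strict `2^k`-ladder, then its thicket dimension is at
least `k`: there is a full `X`-labeled complete balanced binary tree of depth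
`k` over `𝓕`. -/
theorem fullTree_of_strict_ladder {X : Type*} (𝓕 : Set (Set X)) (k : ℕ)
    (x : Fin (2 ^ k) → X) (F : Fin (2 ^ k) → Set X)
    (hF : ∀ i, F i ∈ 𝓕)
    (hlad : ∀ i j : Fin (2 ^ k), x i ∈ F j ↔ i < j) :
    FullTree 𝓕 k :=
  (fullTree_range_of_isStrictLadder k hlad).mono (Set.range_subset_iff.2 hF)
end

section
/- If the thicket dimension of (X,𝓕) is at most k (finite), then the dual thicket dimension of (X,𝓕) is at most 2^{2^{k+2}} - 2. -/
/-- There is a full `𝓕`-labeled complete balanced binary tree of depth `n`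
over the dual system: internal vertices are labeled by members of `𝓕`, and
every leaf is realized by a point of `X` (the point lies in the label of a
prefix iff the leaf turns left there). -/
def DualFullTree {X : Type*} (𝓕 : Set (Set X)) (n : ℕ) : Prop :=
  ∃ lab : List Bool → Set X, (∀ u, lab u ∈ 𝓕) ∧
    ∀ v : List Bool, v.length = n →
      ∃ x : X, ∀ i : Fin v.length, (x ∈ lab (v.take i) ↔ v.get i = false)

/-- The dual thicket dimension of `(X,𝓕)`: the thicket dimension of the dual
set system, swapping points and sets. -/
noncomputable def dualThicketDim {X : Type*} (𝓕 : Set (Set X)) : WithBot ℕ∞ :=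
  sSup {d : WithBot ℕ∞ | ∃ n : ℕ, DualFullTree 𝓕 n ∧ d = ((n : ℕ∞) : WithBot ℕ∞)}

section ThicketProof
variable {X : Type*}

def DTreeP (𝓕 : Set (Set X)) (L : List Bool → Set X) (R : List Bool → X) (d : ℕ) : Prop :=
  (∀ u : List Bool, u.length < d → L u ∈ 𝓕) ∧
  ∀ v : List Bool, v.length = d → ∀ i : ℕ, ∀ hi : i < v.length,
    (R v ∈ L (v.take i) ↔ v[i]'hi = false)

theorem dtree_descend {𝓕 : Set (Set X)} {L : List Bool → Set X} {R : List Bool → X} {d : ℕ}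
    (h : DTreeP 𝓕 L R (d+1)) (b : Bool) :
    DTreeP 𝓕 (fun u => L (b::u)) (fun v => R (b::v)) d := by
  constructor
  · intro u hu
    exact h.1 (b::u) (by simpa using Nat.succ_lt_succ hu)
  · intro v hv i hi
    have h2 := h.2 (b::v) (by simp [hv]) (i+1) (by simpa using Nat.succ_lt_succ hi)
    simpa [List.take_succ_cons, List.getElem_cons_succ] using h2

theorem dtree_trunc {𝓕 : Set (Set X)} {L : List Bool → Set X} {R : List Bool → X} {d : ℕ}
    (h : DTreeP 𝓕 L R d) {m : ℕ} (hm : m ≤ d) :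
    DTreeP 𝓕 L (fun v => R (v ++ List.replicate (d - m) false)) m := by
  constructor
  · intro u hu; exact h.1 u (lt_of_lt_of_le hu hm)
  · intro v hv i hi
    have hlen : (v ++ List.replicate (d - m) false).length = d := by
      simp [hv]; omega
    have h2 := h.2 _ hlen i (by rw [hlen]; omega)
    rw [List.take_append_of_le_length (by omega)] at h2
    rwa [List.getElem_append_left (by omega)] at h2

/-- A monochromatic (w.r.t. the point `a`) embedded sub-dual-tree of `(L, R, d)`:
a dual tree of depth `k` whose labels all contain `a` (if `c = true`) or all avoid `a`
(if `c = false`), whose labels are labels of the original and whose realizers are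
realizers of the original. -/
def SideP (𝓕 : Set (Set X)) (L : List Bool → Set X) (R : List Bool → X) (d : ℕ)
    (a : X) (c : Bool) (k : ℕ) (L' : List Bool → Set X) (R' : List Bool → X) : Prop :=
  DTreeP 𝓕 L' R' k ∧
  (∀ u : List Bool, u.length < k → ((a ∈ L' u) ↔ c = true)) ∧
  (∀ u : List Bool, u.length < k → ∃ w : List Bool, w.length < d ∧ L' u = L w) ∧
  (∀ v : List Bool, v.length = k → ∃ w : List Bool, w.length = d ∧ R' v = R w)

theorem side_lift {𝓕 : Set (Set X)} {L : List Bool → Set X} {R : List Bool → X} {d : ℕ}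
    {a : X} {c : Bool} {k : ℕ} {L' : List Bool → Set X} {R' : List Bool → X} (b : Bool)
    (h : SideP 𝓕 (fun u => L (b::u)) (fun v => R (b::v)) d a c k L' R') :
    SideP 𝓕 L R (d+1) a c k L' R' := by
  obtain ⟨h1, h2, h3, h4⟩ := h
  refine ⟨h1, h2, ?_, ?_⟩
  · intro u hu
    obtain ⟨w, hw, he⟩ := h3 u hu
    exact ⟨b::w, by simpa using Nat.succ_lt_succ hw, he⟩
  · intro v hv
    obtain ⟨w, hw, he⟩ := h4 v hv
    exact ⟨b::w, by simp [hw], he⟩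

theorem side_trunc {𝓕 : Set (Set X)} {L : List Bool → Set X} {R : List Bool → X} {d : ℕ}
    {a : X} {c : Bool} {k : ℕ} {L' : List Bool → Set X} {R' : List Bool → X}
    (h : SideP 𝓕 L R d a c k L' R') {m : ℕ} (hm : m ≤ k) :
    SideP 𝓕 L R d a c m L' (fun v => R' (v ++ List.replicate (k - m) false)) := by
  obtain ⟨h1, h2, h3, h4⟩ := h
  refine ⟨dtree_trunc h1 hm, fun u hu => h2 u (lt_of_lt_of_le hu hm),
    fun u hu => h3 u (lt_of_lt_of_le hu hm), ?_⟩
  intro v hv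
  exact h4 _ (by simp [hv]; omega)

/-- Glue two monochromatic sides of the two children under the root. -/
theorem side_glue {𝓕 : Set (Set X)} {L : List Bool → Set X} {R : List Bool → X} {d : ℕ}
    {a : X} {c : Bool} {m : ℕ}
    (hT : DTreeP 𝓕 L R (d+1)) (hroot : (a ∈ L []) ↔ c = true)
    {Lf Rf Lt Rt}
    (hf : SideP 𝓕 (fun u => L (false::u)) (fun v => R (false::v)) d a c m Lf Rf)
    (ht : SideP 𝓕 (fun u => L (true::u)) (fun v => R (true::v)) d a c m Lt Rt) :
    SideP 𝓕 L R (d+1) a c (m+1)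
      (fun u => match u with | [] => L [] | (false::u') => Lf u' | (true::u') => Lt u')
      (fun v => match v with
        | [] => R (List.replicate (d+1) false)
        | (false::v') => Rf v' | (true::v') => Rt v') := by
  obtain ⟨f1, f2, f3, f4⟩ := hf
  obtain ⟨t1, t2, t3, t4⟩ := ht
  refine ⟨⟨?_, ?_⟩, ?_, ?_, ?_⟩
  · -- labels in 𝓕
    intro u hu
    match u with
    | [] => exact hT.1 [] (by simp)
    | (false::u') => exact f1.1 u' (by simpa using hu)
    | (true::u') => exact t1.1 u' (by simpa using hu)
  · -- validity
    intro v hv i hi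
    match v with
    | [] => simp at hv
    | (b::v') =>
      have hv' : v'.length = m := by simpa using hv
      match i with
      | 0 =>
        -- realizer vs root label
        have hrange : ∃ w : List Bool, w.length = d ∧
            (match (b::v') with
              | [] => R (List.replicate (d+1) false)
              | (false::v') => Rf v' | (true::v') => Rt v') = R (b::w) := by
          cases b
          · exact f4 v' hv'
          · exact t4 v' hv'
        obtain ⟨w, hw, he⟩ := hrange
        have h2 := hT.2 (b::w) (by simp [hw]) 0 (by simp)
        simp only [List.take_zero, List.getElem_cons_zero] at h2 ⊢
        rw [he]; exact h2
      | (i+1) =>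
        have hi' : i < v'.length := by simpa using Nat.lt_of_succ_lt_succ hi
        cases b
        · have := f1.2 v' hv' i hi'
          simpa [List.take_succ_cons, List.getElem_cons_succ] using this
        · have := t1.2 v' hv' i hi'
          simpa [List.take_succ_cons, List.getElem_cons_succ] using this
  · -- mono
    intro u hu
    match u with
    | [] => exact hroot
    | (false::u') => exact f2 u' (by simpa using hu)
    | (true::u') => exact t2 u' (by simpa using hu)
  · -- label range
    intro u hu
    match u with
    | [] => exact ⟨[], by simp, rfl⟩
    | (false::u') =>
      obtain ⟨w, hw, he⟩ := f3 u' (by simpa using hu)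
      exact ⟨false::w, by simpa using Nat.succ_lt_succ hw, he⟩
    | (true::u') =>
      obtain ⟨w, hw, he⟩ := t3 u' (by simpa using hu)
      exact ⟨true::w, by simpa using Nat.succ_lt_succ hw, he⟩
  · -- realizer range
    intro v hv
    match v with
    | [] => simp at hv
    | (false::v') =>
      obtain ⟨w, hw, he⟩ := f4 v' (by simpa using hv)
      exact ⟨false::w, by simp [hw], he⟩
    | (true::v') =>
      obtain ⟨w, hw, he⟩ := t4 v' (by simpa using hv)
      exact ⟨true::w, by simp [hw], he⟩
/-- Halving: every dual tree of depth `d` contains, for each point `a`, monochromatic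
sub-dual-trees of depths `k₀` (labels avoiding `a`) and `k₁` (labels containing `a`)
with `k₀ + k₁ ≥ d`. -/
theorem dtree_halve {𝓕 : Set (Set X)} :
    ∀ (d : ℕ) (L : List Bool → Set X) (R : List Bool → X), DTreeP 𝓕 L R d → ∀ a : X,
    ∃ (k₀ : ℕ) (L₀ : List Bool → Set X) (R₀ : List Bool → X)
      (k₁ : ℕ) (L₁ : List Bool → Set X) (R₁ : List Bool → X),
      d ≤ k₀ + k₁ ∧ SideP 𝓕 L R d a false k₀ L₀ R₀ ∧ SideP 𝓕 L R d a true k₁ L₁ R₁ := by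
  intro d
  induction d with
  | zero =>
    intro L R h a
    refine ⟨0, L, R, 0, L, R, by omega, ?_, ?_⟩ <;>
      exact ⟨h, fun u hu => by omega, fun u hu => by omega,
        fun v hv => ⟨v, hv, rfl⟩⟩
  | succ d ih =>
    intro L R h a
    obtain ⟨p₀, AL₀, AR₀, q₀, BL₀, BR₀, hs₀, hF₀, hT₀⟩ := ih _ _ (dtree_descend h false) a
    obtain ⟨p₁, AL₁, AR₁, q₁, BL₁, BR₁, hs₁, hF₁, hT₁⟩ := ih _ _ (dtree_descend h true) a
    by_cases hmem : a ∈ L []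
    · -- glue the `true` sides, lift the best `false` side
      have m := min q₀ q₁
      have hg := side_glue h (c := true) (by simp [hmem])
        (side_trunc hT₀ (min_le_left q₀ q₁)) (side_trunc hT₁ (min_le_right q₀ q₁))
      by_cases hp : p₀ ≤ p₁
      · exact ⟨p₁, AL₁, AR₁, _, _, _, by omega, side_lift true hF₁, hg⟩
      · exact ⟨p₀, AL₀, AR₀, _, _, _, by omega, side_lift false hF₀, hg⟩
    · -- glue the `false` sides, lift the best `true` side
      have hg := side_glue h (c := false) (by simp [hmem])
        (side_trunc hF₀ (min_le_left p₀ p₁)) (side_trunc hF₁ (min_le_right p₀ p₁))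
      by_cases hq : q₀ ≤ q₁
      · exact ⟨_, _, _, q₁, BL₁, BR₁, by omega, hg, side_lift true hT₁⟩
      · exact ⟨_, _, _, q₀, BL₀, BR₀, by omega, hg, side_lift false hT₀⟩
/-- Main extraction: a dual tree of depth `≥ 2^(s+2) - 2` contains an off-diagonal
ladder of length `s+2`: points `x i` and sets `F j` (labels of the tree) with
`x i ∈ F j` whenever `i < j` and `x i ∉ F j` whenever `j < i`. -/
theorem dtree_ladder {𝓕 : Set (Set X)} :
    ∀ (s : ℕ) (d : ℕ) (L : List Bool → Set X) (R : List Bool → X),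
    DTreeP 𝓕 L R d → 2^(s+2) - 2 ≤ d →
    ∃ (F : Fin (s+2) → Set X) (x : Fin (s+2) → X),
      (∀ j, ∃ u : List Bool, u.length < d ∧ F j = L u) ∧
      (∀ i, ∃ w : List Bool, w.length = d ∧ x i = R w) ∧
      (∀ i j, i < j → x i ∈ F j) ∧ (∀ i j, j < i → x i ∉ F j) := by
  intro s
  induction s with
  | zero =>
    intro d L R h hd
    have hd2 : 2 ≤ d := by norm_num at hd; omega
    have hlen0 : (List.replicate d false : List Bool).length = d := by simp
    have hlen1 : (false :: true :: List.replicate (d-2) false : List Bool).length = d := by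
      simp; omega
    have hx0 : R (List.replicate d false) ∈ L [] := by
      have h2 := h.2 (List.replicate d false) hlen0 0 (by omega)
      simp only [List.take_zero] at h2
      rw [h2]
      simp
    have hx1 : R (false :: true :: List.replicate (d-2) false) ∉ L [false] := by
      have h2 := h.2 (false :: true :: List.replicate (d-2) false) hlen1 1 (by omega)
      have ht : (false :: true :: List.replicate (d-2) false : List Bool).take 1 = [false] := by
        simp
      have hg : (false :: true :: List.replicate (d-2) false : List Bool)[1]'(by omega)
          = true := by simp
      rw [ht, hg] at h2
      simp at h2
      exact h2
    refine ⟨fun j => if j.val = 0 then L [false] else L [],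
      fun i => if i.val = 0 then R (List.replicate d false) else R (false :: true :: List.replicate (d-2) false), ?_, ?_, ?_, ?_⟩
    · intro j
      by_cases hj : j.val = 0
      · exact ⟨[false], by simp; omega, by simp [hj]⟩
      · exact ⟨[], by simp; omega, by simp [hj]⟩
    · intro i
      by_cases hi : i.val = 0
      · exact ⟨_, hlen0, by simp [hi]⟩
      · exact ⟨_, hlen1, by simp [hi]⟩
    · intro i j hij
      have hij' : i.val < j.val := hij
      have hj2 : j.val < 2 := j.isLt
      have : i.val = 0 ∧ j.val = 1 := by omega
      simp [this.1, this.2, hx0]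
    · intro i j hji
      have hji' : j.val < i.val := hji
      have hi2 : i.val < 2 := i.isLt
      have : j.val = 0 ∧ i.val = 1 := by omega
      simp [this.1, this.2, hx1]
  | succ s ih =>
    intro d L R h hd
    have hpow : 2^(s+1+2) = 2*2^(s+2) := by ring
    have hpow4 : 4 ≤ 2^(s+2) := by
      calc (4:ℕ) = 2^2 := by norm_num
      _ ≤ 2^(s+2) := Nat.pow_le_pow_right (by norm_num) (by omega)
    obtain ⟨e, rfl⟩ : ∃ e, d = e + 2 := ⟨d - 2, by omega⟩
    have hT2 : DTreeP 𝓕 (fun u => L (true::false::u)) (fun v => R (true::false::v)) e :=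
      dtree_descend (dtree_descend h true) false
    set xa : X := R (List.replicate (e+2) false) with hxa
    obtain ⟨k₀, L₀, R₀, k₁, L₁, R₁, hsum, sF, sT⟩ := dtree_halve e _ _ hT2 xa
    have hM : 2^(s+2) - 2 ≤ k₀ ∨ 2^(s+2) - 2 ≤ k₁ := by omega
    -- helper: validity of realizers coming from the halved subtree
    have hval : ∀ w' : List Bool, w'.length = e →
        (R (true::false::w') ∉ L []) ∧ (R (true::false::w') ∈ L [true]) := by
      intro w' hw'
      have hlen : (true::false::w').length = e + 2 := by simp [hw']
      constructor
      · have h2 := h.2 (true::false::w') hlen 0 (by simp)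
        simp only [List.take_zero, List.getElem_cons_zero] at h2
        simp [h2]
      · have h2 := h.2 (true::false::w') hlen 1 (by simp)
        have ht : (true::false::w').take 1 = [true] := by simp
        have hg : (true::false::w')[1]'(by simp) = false := by simp
        rw [ht, hg] at h2
        exact h2.mpr rfl
    rcases hM with hM | hM
    · -- use the `false` (avoiding) side: append `(xa, L [true])` at the top
      obtain ⟨F, x, hFr, hxr, hin, hout⟩ := ih k₀ L₀ R₀ sF.1 hM
      refine ⟨fun j => if hj : j.val < s+2 then F ⟨j.val, hj⟩ else L [true],
        fun i => if hi : i.val < s+2 then x ⟨i.val, hi⟩ else xa, ?_, ?_, ?_, ?_⟩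
      · intro j
        by_cases hj : j.val < s+2
        · obtain ⟨u, hu, he⟩ := hFr ⟨j.val, hj⟩
          obtain ⟨w, hw, he2⟩ := sF.2.2.1 u hu
          exact ⟨true::false::w, by simp; omega, by dsimp only; rw [dif_pos hj, he, he2]⟩
        · exact ⟨[true], by simp, by dsimp only; rw [dif_neg hj]⟩
      · intro i
        by_cases hi : i.val < s+2
        · obtain ⟨w, hw, he⟩ := hxr ⟨i.val, hi⟩
          obtain ⟨w', hw', he2⟩ := sF.2.2.2 w hw
          exact ⟨true::false::w', by simp [hw'], by dsimp only; rw [dif_pos hi, he, he2]⟩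
        · exact ⟨List.replicate (e+2) false, by simp, by dsimp only; rw [dif_neg hi]⟩
      · intro i j hij
        have hij' : i.val < j.val := hij
        by_cases hj : j.val < s+2
        · have hi : i.val < s+2 := by omega
          dsimp only; rw [dif_pos hj, dif_pos hi]
          exact hin _ _ (by exact hij')
        · have hi : i.val < s+2 := by have := j.isLt; omega
          dsimp only; rw [dif_neg hj, dif_pos hi]
          obtain ⟨w, hw, he⟩ := hxr ⟨i.val, hi⟩
          obtain ⟨w', hw', he2⟩ := sF.2.2.2 w hw
          rw [he, he2]
          exact (hval w' hw').2
      · intro i j hji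
        have hji' : j.val < i.val := hji
        by_cases hi : i.val < s+2
        · have hj : j.val < s+2 := by omega
          dsimp only; rw [dif_pos hj, dif_pos hi]
          exact hout _ _ (by exact hji')
        · have hj : j.val < s+2 := by have := i.isLt; omega
          dsimp only; rw [dif_neg hi, dif_pos hj]
          obtain ⟨u, hu, he⟩ := hFr ⟨j.val, hj⟩
          rw [he]
          intro hmem
          have := (sF.2.1 u hu).mp hmem
          simp at this
    · -- use the `true` (containing) side: prepend `(xa, L [])` at the bottom
      obtain ⟨F, x, hFr, hxr, hin, hout⟩ := ih k₁ L₁ R₁ sT.1 hM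
      refine ⟨fun j => if hj : j.val = 0 then L [] else F ⟨j.val - 1, by omega⟩,
        fun i => if hi : i.val = 0 then xa else x ⟨i.val - 1, by omega⟩, ?_, ?_, ?_, ?_⟩
      · intro j
        by_cases hj : j.val = 0
        · exact ⟨[], by simp, by dsimp only; rw [dif_pos hj]⟩
        · obtain ⟨u, hu, he⟩ := hFr ⟨j.val - 1, by omega⟩
          obtain ⟨w, hw, he2⟩ := sT.2.2.1 u hu
          exact ⟨true::false::w, by simp; omega, by dsimp only; rw [dif_neg hj, he, he2]⟩
      · intro i
        by_cases hi : i.val = 0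
        · exact ⟨List.replicate (e+2) false, by simp, by dsimp only; rw [dif_pos hi]⟩
        · obtain ⟨w, hw, he⟩ := hxr ⟨i.val - 1, by omega⟩
          obtain ⟨w', hw', he2⟩ := sT.2.2.2 w hw
          exact ⟨true::false::w', by simp [hw'], by dsimp only; rw [dif_neg hi, he, he2]⟩
      · intro i j hij
        have hij' : i.val < j.val := hij
        have hj : ¬ j.val = 0 := by omega
        by_cases hi : i.val = 0
        · dsimp only; rw [dif_pos hi, dif_neg hj]
          obtain ⟨u, hu, he⟩ := hFr ⟨j.val - 1, by omega⟩
          rw [he]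
          exact (sT.2.1 u hu).mpr rfl
        · dsimp only; rw [dif_neg hi, dif_neg hj]
          exact hin _ _ (by show i.val - 1 < j.val - 1; omega)
      · intro i j hji
        have hji' : j.val < i.val := hji
        have hi : ¬ i.val = 0 := by omega
        by_cases hj : j.val = 0
        · dsimp only; rw [dif_neg hi, dif_pos hj]
          obtain ⟨w, hw, he⟩ := hxr ⟨i.val - 1, by omega⟩
          obtain ⟨w', hw', he2⟩ := sT.2.2.2 w hw
          rw [he, he2]
          exact (hval w' hw').1
        · dsimp only; rw [dif_neg hi, dif_neg hj]
          exact hout _ _ (by show j.val - 1 < i.val - 1; omega)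
/-- Positional binary value of a string: bit `i` (from the root, `false` counting)
contributes `2^(e-1-i)`. -/
def Aval : List Bool → ℕ → ℕ
  | [], _ => 0
  | (b :: u), e => (if b then 0 else 2^(e-1)) + Aval u (e-1)

theorem Aval_append (u w : List Bool) : ∀ e : ℕ,
    Aval (u ++ w) e = Aval u e + Aval w (e - u.length) := by
  induction u with
  | nil => intro e; simp [Aval]
  | cons b u ihu =>
    intro e
    rw [List.cons_append]
    simp only [Aval]
    rw [ihu (e-1)]
    have h : e - (b :: u).length = (e - 1) - u.length := by simp; omega
    rw [h]
    omega

theorem Aval_bound (w : List Bool) : ∀ e : ℕ, w.length ≤ e →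
    Aval w e + 2^(e - w.length) ≤ 2^e := by
  induction w with
  | nil => intro e he; simp [Aval]
  | cons b w ihw =>
    intro e he
    have he1 : 1 ≤ e := by simp at he; omega
    have hsub : e - (b :: w).length = (e - 1) - w.length := by simp; omega
    have hw : w.length ≤ e - 1 := by simp at he; omega
    have h1 := ihw (e-1) hw
    have h2 : (if b then 0 else 2^(e-1)) ≤ 2^(e-1) := by
      split <;> simp
    have hpow : 2^e = 2^(e-1) + 2^(e-1) := by
      have : e - 1 + 1 = e := by omega
      calc 2^e = 2^(e-1+1) := by rw [this]
      _ = 2^(e-1) + 2^(e-1) := by ring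
    simp only [Aval, hsub]
    omega

/-- From a strict ladder of length `2^d` one builds a full tree of depth `d`
by binary search. -/
theorem strictLadder_fullTree {𝓕 : Set (Set X)} (d : ℕ)
    (y : Fin (2^d) → X) (G : Fin (2^d) → Set X)
    (hG : ∀ t, G t ∈ 𝓕) (hlad : ∀ s t, y s ∈ G t ↔ s ≤ t) :
    FullTree 𝓕 d := by
  have hbound : ∀ u : List Bool, u.length < d → Aval u d + 2^(d-1-u.length) < 2^d := by
    intro u hu
    have h1 := Aval_bound u d (le_of_lt hu)
    have h2 : 2^(d-1-u.length) < 2^(d-u.length) :=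
      Nat.pow_lt_pow_right (by norm_num) (by omega)
    omega
  refine ⟨fun u => if h : u.length < d then y ⟨Aval u d + 2^(d-1-u.length), hbound u h⟩
    else y ⟨0, Nat.two_pow_pos d⟩, ?_⟩
  intro v hv
  have hAv : Aval v d < 2^d := by
    have h1 := Aval_bound v d (le_of_eq hv)
    have : d - v.length = 0 := by omega
    rw [this] at h1
    simpa using h1
  refine ⟨G ⟨Aval v d, hAv⟩, hG _, ?_⟩
  intro i
  have hiv : (i : ℕ) < v.length := i.isLt
  have hid : (i : ℕ) < d := by omega
  have htl : (v.take (i : ℕ)).length = (i : ℕ) := by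
    simp [hv]; omega
  have hsplit : Aval v d = Aval (v.take (i:ℕ)) d + Aval (v.drop (i:ℕ)) (d - (i:ℕ)) := by
    conv_lhs => rw [← List.take_append_drop (i:ℕ) v]
    rw [Aval_append, htl]
  have hdrop : v.drop (i:ℕ) = v[(i:ℕ)] :: v.drop ((i:ℕ)+1) := List.drop_eq_getElem_cons hiv
  have hdlen : (v.drop ((i:ℕ)+1)).length = d - ((i:ℕ)+1) := by simp [hv]
  have hrest : Aval (v.drop ((i:ℕ)+1)) (d - (i:ℕ) - 1) < 2^(d - (i:ℕ) - 1) := by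
    have h1 := Aval_bound (v.drop ((i:ℕ)+1)) (d - (i:ℕ) - 1) (by omega)
    have h2 : (d - (i:ℕ) - 1) - (v.drop ((i:ℕ)+1)).length = 0 := by omega
    rw [h2] at h1
    have := Nat.two_pow_pos (d - (i:ℕ) - 1)
    omega
  have hdecomp : Aval v d = Aval (v.take (i:ℕ)) d +
      ((if v[(i:ℕ)] then 0 else 2^(d - (i:ℕ) - 1)) + Aval (v.drop ((i:ℕ)+1)) (d - (i:ℕ) - 1)) := by
    rw [hsplit, hdrop]
    rfl
  have hexp : d - 1 - (i:ℕ) = d - (i:ℕ) - 1 := by omega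
  have hlab : (if h : (v.take (i:ℕ)).length < d then
      y ⟨Aval (v.take (i:ℕ)) d + 2^(d-1-(v.take (i:ℕ)).length), hbound _ h⟩
      else y ⟨0, Nat.two_pow_pos d⟩)
      = y ⟨Aval (v.take (i:ℕ)) d + 2^(d-1-(i:ℕ)), by
        have hb := hbound (v.take (i:ℕ)) (by omega)
        rwa [htl] at hb⟩ := by
    rw [dif_pos (by omega : (v.take (i:ℕ)).length < d)]
    congr 1
    ext
    simp [htl]
  show (if h : (v.take (i:ℕ)).length < d then _ else _) ∈ G ⟨Aval v d, hAv⟩ ↔ v.get i = false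
  rw [hlab, hlad]
  rw [Fin.mk_le_mk]
  have hget : v.get i = v[(i:ℕ)] := rfl
  rw [hget]
  cases hb : v[(i:ℕ)] with
  | false =>
    simp only [hb, Bool.false_eq_true, if_false] at hdecomp
    constructor
    · intro _; rfl
    · intro _
      rw [hexp]
      omega
  | true =>
    simp only [hb, if_true] at hdecomp
    constructor
    · intro hle
      exfalso
      rw [hexp] at hle
      omega
    · intro hc; exact absurd hc (by simp)
theorem dualFullTree_dtree {𝓕 : Set (Set X)} {n : ℕ} (h : DualFullTree 𝓕 n) :
    ∃ (L : List Bool → Set X) (R : List Bool → X), DTreeP 𝓕 L R n := by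
  obtain ⟨lab, hlab, hreal⟩ := h
  obtain ⟨x0, -⟩ := hreal (List.replicate n false) (by simp)
  refine ⟨lab, fun v => if hv : v.length = n then (hreal v hv).choose else x0, ?_, ?_⟩
  · intro u _; exact hlab u
  · intro v hv i hi
    have hspec := (hreal v hv).choose_spec ⟨i, hi⟩
    dsimp only
    rw [dif_pos hv]
    simpa [List.get_eq_getElem] using hspec

end ThicketProof

/-- If the thicket dimension of `(X,𝓕)` is at most `k`, then its dual thicket
dimension is at most `2^{2^{k+2}} - 2`. -/
theorem dualThicketDim_le {X : Type*} (𝓕 : Set (Set X)) (k : ℕ)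
    (hdim : thicketDim 𝓕 ≤ ((k : ℕ∞) : WithBot ℕ∞)) :
    dualThicketDim 𝓕 ≤ (((2 ^ 2 ^ (k + 2) - 2 : ℕ) : ℕ∞) : WithBot ℕ∞) := by
  apply sSup_le
  rintro b ⟨n, hn, rfl⟩
  rw [WithBot.coe_le_coe, Nat.cast_le]
  by_contra hB
  push_neg at hB
  obtain ⟨L, R, hDT⟩ := dualFullTree_dtree hn
  have hk4 : 4 ≤ 2^(k+2) := by
    calc (4:ℕ) = 2^2 := by norm_num
    _ ≤ 2^(k+2) := Nat.pow_le_pow_right (by norm_num) (by omega)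
  have h2pow : 2*2^(k+1) = 2^(k+2) := by ring
  have hms : (2^(k+2) - 2) + 2 = 2^(k+2) := by omega
  have hd : 2^((2^(k+2) - 2) + 2) - 2 ≤ n := by rw [hms]; omega
  obtain ⟨F, x, hFr, hxr, hin, hout⟩ := dtree_ladder (2^(k+2) - 2) n L R hDT hd
  have hFmem : ∀ j, F j ∈ 𝓕 := by
    intro j
    obtain ⟨u, hu, he⟩ := hFr j
    rw [he]; exact hDT.1 u hu
  have hFT : FullTree 𝓕 (k+1) := by
    refine strictLadder_fullTree (k+1)
      (fun s => x ⟨2*s.val, by have := s.isLt; omega⟩)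
      (fun t => F ⟨2*t.val+1, by have := t.isLt; omega⟩)
      (fun t => hFmem _) ?_
    intro s t
    rw [Fin.le_def]
    constructor
    · intro hmem
      by_contra hst
      push_neg at hst
      exact hout ⟨2*s.val, by have := s.isLt; omega⟩ ⟨2*t.val+1, by have := t.isLt; omega⟩
        (Fin.mk_lt_mk.mpr (by omega)) hmem
    · intro hst
      exact hin ⟨2*s.val, by have := s.isLt; omega⟩ ⟨2*t.val+1, by have := t.isLt; omega⟩
        (Fin.mk_lt_mk.mpr (by omega))
  have hle : (((k+1 : ℕ) : ℕ∞) : WithBot ℕ∞) ≤ thicketDim 𝓕 := le_sSup ⟨k+1, hFT, rfl⟩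
  have hcon := hle.trans hdim
  rw [WithBot.coe_le_coe, Nat.cast_le] at hcon
  omega
end

section
/- (Stable Erdős–Hajnal) Let k be a natural number and let G = (V,E) be a finite graph such that the set system (V, {Γ_v : v ∈ V}) has thicket dimension at most k. Then G contains a clique or an independent set of size at least (|V|^{1/(k+1)} − 2)/2. -/
/-! ### Auxiliary development: type trees -/

/-- Binary trees with vertices labeled by `V`. -/
inductive TT (V : Type*) where
  | leaf : TT V
  | node : V → TT V → TT V → TT V

namespace TT

variable {V : Type*}

/-- Multiset of labels of a tree. -/
def labels : TT V → Multiset V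
  | .leaf => 0
  | .node v l r => v ::ₘ (labels l + labels r)

/-- Height of a tree (number of nodes on a longest root-leaf path). -/
def ht : TT V → ℕ
  | .leaf => 0
  | .node _ l r => 1 + max (ht l) (ht r)

/-- `HasFull d t` : `t` contains an embedded (direction-preserving) complete
binary tree of depth `d` (with `d+1` levels of nodes... actually `d` levels of
internal structure: a single node for `d = 0`). -/
def HasFull : ℕ → TT V → Prop
  | 0, .leaf => False
  | 0, .node _ _ _ => True
  | _+1, .leaf => False
  | d+1, .node _ l r => HasFull (d+1) l ∨ HasFull (d+1) r ∨ (HasFull d l ∧ HasFull d r)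

/-- A type tree for a graph `G`: every label in the left subtree is adjacent to
the root, every label in the right subtree is non-adjacent. -/
def Compat (G : SimpleGraph V) : TT V → Prop
  | .leaf => True
  | .node v l r => (∀ w ∈ labels l, G.Adj v w) ∧ (∀ w ∈ labels r, ¬ G.Adj v w)
      ∧ Compat G l ∧ Compat G r

/-- Unbalanced Sauer–Shelah: a tree of height `≤ h` with no embedded complete
tree of depth `d` has fewer than `(h+1)^d` nodes. -/
lemma card_le (t : TT V) : ∀ (d h : ℕ), ¬ HasFull d t → ht t ≤ h →
    Multiset.card (labels t) + 1 ≤ (h + 1) ^ d := by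
  induction t with
  | leaf =>
    intro d h _ _
    simpa [labels] using Nat.one_le_pow d (h + 1) (Nat.succ_pos h)
  | node v l r ihl ihr =>
    intro d h hd hh
    match d with
    | 0 => exact absurd trivial hd
    | d+1 =>
      simp only [HasFull, not_or, not_and_or] at hd
      obtain ⟨h1, h2, h3⟩ := hd
      have hhl : ht l ≤ h - 1 := by
        have := le_max_left (ht l) (ht r)
        simp only [ht] at hh; omega
      have hhr : ht r ≤ h - 1 := by
        have := le_max_right (ht l) (ht r)
        simp only [ht] at hh; omega
      have h1h : 1 ≤ h := by simp only [ht] at hh; omega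
      have he : h - 1 + 1 = h := by omega
      have key : ∀ (a b : ℕ), Multiset.card (labels l) + 1 ≤ a →
          Multiset.card (labels r) + 1 ≤ b → a + b ≤ (h+1)^(d+1) →
          Multiset.card (labels (node v l r)) + 1 ≤ (h+1)^(d+1) := by
        intro a b ha hb hab
        simp only [labels, Multiset.card_cons, Multiset.card_add]
        omega
      have hpow : h ^ d + h ^ (d+1) ≤ (h+1)^(d+1) := by
        calc h ^ d + h ^ (d+1) = (h + 1) * h ^ d := by ring
        _ ≤ (h + 1) * (h + 1) ^ d := Nat.mul_le_mul_left _ (Nat.pow_le_pow_left (Nat.le_succ h) d)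
        _ = (h + 1) ^ (d+1) := by ring
      rcases h3 with h3 | h3
      · have ha := ihl d (h-1) h3 hhl
        have hb := ihr (d+1) (h-1) h2 hhr
        rw [he] at ha hb
        exact key _ _ ha hb hpow
      · have ha := ihl (d+1) (h-1) h1 hhl
        have hb := ihr d (h-1) h3 hhr
        rw [he] at ha hb
        exact key _ _ ha hb (by omega)

/-- From an embedded complete tree of depth `d` in a type tree, extract a
labeling witnessing a full tree of depth `d` over neighborhoods. -/
lemma exists_lab (G : SimpleGraph V) (t : TT V) : ∀ (d : ℕ), Compat G t → HasFull d t →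
    ∃ lab : List Bool → V, (∀ u, lab u ∈ labels t) ∧
      ∀ v : List Bool, v.length = d → ∀ i : Fin v.length,
        (lab (v.take i) ∈ G.neighborSet (lab v) ↔ v.get i = false) := by
  induction t with
  | leaf =>
    intro d _ hd
    exfalso; cases d <;> exact hd
  | node v l r ihl ihr =>
    intro d hc hd
    obtain ⟨hcl, hcr, hl, hr⟩ := hc
    match d with
    | 0 =>
      refine ⟨fun _ => v, fun u => by simp [labels], fun w hw i => ?_⟩
      exact absurd i.2 (by omega)
    | d+1 =>
      rcases hd with hfl | hfr | ⟨hf1, hf2⟩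
      · obtain ⟨lab, hmem, hreal⟩ := ihl (d+1) hl hfl
        refine ⟨lab, fun u => ?_, hreal⟩
        simp only [labels, Multiset.mem_cons, Multiset.mem_add]
        exact Or.inr (Or.inl (hmem u))
      · obtain ⟨lab, hmem, hreal⟩ := ihr (d+1) hr hfr
        refine ⟨lab, fun u => ?_, hreal⟩
        simp only [labels, Multiset.mem_cons, Multiset.mem_add]
        exact Or.inr (Or.inr (hmem u))
      · obtain ⟨labl, hml, hrl⟩ := ihl d hl hf1
        obtain ⟨labr, hmr, hrr⟩ := ihr d hr hf2
        refine ⟨fun u => match u with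
          | [] => v
          | false :: u' => labl u'
          | true :: u' => labr u', ?_, ?_⟩
        · intro u
          match u with
          | [] => simp [labels]
          | false :: u' =>
            simp only [labels, Multiset.mem_cons, Multiset.mem_add]
            exact Or.inr (Or.inl (hml u'))
          | true :: u' =>
            simp only [labels, Multiset.mem_cons, Multiset.mem_add]
            exact Or.inr (Or.inr (hmr u'))
        · intro w hw i
          match w with
          | [] => simp at hw
          | b :: w' =>
            have hw' : w'.length = d := by simpa using hw
            rcases i with ⟨iv, hi⟩
            match iv with
            | 0 =>
              simp only [List.take_zero, List.get]
              cases b with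
              | false =>
                have : G.Adj v (labl w') := hcl _ (hml w')
                simpa using this.symm
              | true =>
                have : ¬ G.Adj v (labr w') := hcr _ (hmr w')
                simp only [SimpleGraph.mem_neighborSet]
                constructor
                · intro h; exact (this h.symm).elim
                · intro h; simp at h
            | j + 1 =>
              have hj : j < w'.length := by simpa using hi
              cases b with
              | false =>
                have := hrl w' hw' ⟨j, hj⟩
                simpa [List.take_succ_cons, List.get] using this
              | true =>
                have := hrr w' hw' ⟨j, hj⟩
                simpa [List.take_succ_cons, List.get] using this

/-- Construct a type tree with a prescribed set of labels. -/
lemma build (G : SimpleGraph V) [DecidableEq V] (W : Finset V) :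
    ∃ t : TT V, Compat G t ∧ labels t = W.val := by
  classical
  induction W using Finset.strongInduction with
  | _ W ih =>
    rcases W.eq_empty_or_nonempty with rfl | ⟨r, hr⟩
    · exact ⟨.leaf, trivial, rfl⟩
    · have hAs : (W.erase r).filter (fun w => G.Adj r w) ⊂ W :=
        lt_of_le_of_lt (Finset.filter_subset _ _) (Finset.erase_ssubset hr)
      have hBs : (W.erase r).filter (fun w => ¬ G.Adj r w) ⊂ W :=
        lt_of_le_of_lt (Finset.filter_subset _ _) (Finset.erase_ssubset hr)
      obtain ⟨tA, cA, lA⟩ := ih _ hAs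
      obtain ⟨tB, cB, lB⟩ := ih _ hBs
      refine ⟨.node r tA tB, ⟨?_, ?_, cA, cB⟩, ?_⟩
      · intro w hw
        rw [lA] at hw
        exact (Finset.mem_filter.mp hw).2
      · intro w hw
        rw [lB] at hw
        exact (Finset.mem_filter.mp hw).2
      · show r ::ₘ (labels tA + labels tB) = W.val
        rw [lA, lB]
        have h1 : ((W.erase r).filter (fun w => G.Adj r w)).val
            + ((W.erase r).filter (fun w => ¬ G.Adj r w)).val = (W.erase r).val := by
          simp only [Finset.filter_val]
          exact Multiset.filter_add_not _ _
        rw [h1, Finset.erase_val]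
        exact Multiset.cons_erase hr

/-- A longest root-leaf path in a tree, recording each node's label and the
direction taken at it. -/
def longPath : TT V → List (V × Bool)
  | .leaf => []
  | .node v l r => if ht r ≤ ht l then (v, false) :: longPath l else (v, true) :: longPath r

lemma longPath_length (t : TT V) : (longPath t).length = ht t := by
  induction t with
  | leaf => rfl
  | node v l r ihl ihr =>
    simp only [longPath, ht]
    split <;> simp [ihl, ihr] <;> omega

lemma fst_mem_labels {t : TT V} {p : V × Bool} (hp : p ∈ longPath t) : p.1 ∈ labels t := by
  induction t with
  | leaf => simp [longPath] at hp
  | node v l r ihl ihr =>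
    simp only [longPath] at hp
    simp only [labels, Multiset.mem_cons, Multiset.mem_add]
    split at hp <;> rcases List.mem_cons.mp hp with h | h
    · left; rw [h]
    · exact Or.inr (Or.inl (ihl h))
    · left; rw [h]
    · exact Or.inr (Or.inr (ihr h))

lemma map_fst_le (t : TT V) : (↑((longPath t).map Prod.fst) : Multiset V) ≤ labels t := by
  induction t with
  | leaf => simp [longPath, labels]
  | node v l r ihl ihr =>
    simp only [longPath, labels]
    split
    · calc (↑(((v, false) :: longPath l).map Prod.fst) : Multiset V)
          = v ::ₘ ↑((longPath l).map Prod.fst) := by simp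
        _ ≤ v ::ₘ (labels l + labels r) :=
          Multiset.cons_le_cons _ (ihl.trans (le_add_right le_rfl))
    · calc (↑(((v, true) :: longPath r).map Prod.fst) : Multiset V)
          = v ::ₘ ↑((longPath r).map Prod.fst) := by simp
        _ ≤ v ::ₘ (labels l + labels r) :=
          Multiset.cons_le_cons _ (ihr.trans (le_add_left le_rfl))

lemma longPath_pairwise (G : SimpleGraph V) (t : TT V) (hc : Compat G t) :
    (longPath t).Pairwise
      (fun p q => (p.2 = false → G.Adj p.1 q.1) ∧ (p.2 = true → ¬ G.Adj p.1 q.1)) := by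
  induction t with
  | leaf => simp [longPath]
  | node v l r ihl ihr =>
    obtain ⟨hcl, hcr, hl, hr⟩ := hc
    simp only [longPath]
    split
    · refine List.pairwise_cons.mpr ⟨fun q hq => ⟨fun _ => hcl _ (fst_mem_labels hq),
        fun h => by simp at h⟩, ihl hl⟩
    · refine List.pairwise_cons.mpr ⟨fun q hq => ⟨fun h => by simp at h,
        fun _ => hcr _ (fst_mem_labels hq)⟩, ihr hr⟩

end TT

/-- Stable Erdős–Hajnal: if `G` is a finite graph whose system of neighborhoods
has thicket dimension at most `k`, then `G` contains a clique or an independent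
set of size at least `(|V|^{1/(k+1)} - 2)/2`. -/
theorem stable_erdos_hajnal {V : Type*} [Fintype V] (G : SimpleGraph V) (k : ℕ)
    (hdim : thicketDim {S : Set V | ∃ v : V, S = G.neighborSet v}
      ≤ ((k : ℕ∞) : WithBot ℕ∞)) :
    ∃ s : Finset V,
      ((Fintype.card V : ℝ) ^ ((1 : ℝ) / (k + 1)) - 2) / 2 ≤ (s.card : ℝ) ∧
      (G.IsClique ↑s ∨ (↑s : Set V).Pairwise fun a b => ¬ G.Adj a b) := by
  classical
  obtain ⟨t, hc, hlab⟩ := TT.build G (Finset.univ : Finset V)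
  -- no embedded full tree of depth k+1
  have hnf : ¬ TT.HasFull (k+1) t := by
    intro hf
    obtain ⟨lab, _, hreal⟩ := TT.exists_lab G t (k+1) hc hf
    have hft : FullTree {S : Set V | ∃ v : V, S = G.neighborSet v} (k+1) :=
      ⟨lab, fun w hw => ⟨G.neighborSet (lab w), ⟨lab w, rfl⟩, fun i => hreal w hw i⟩⟩
    have hle : (((k+1 : ℕ) : ℕ∞) : WithBot ℕ∞)
        ≤ thicketDim {S : Set V | ∃ v : V, S = G.neighborSet v} :=
      le_sSup ⟨k+1, hft, rfl⟩
    have h2 := hle.trans hdim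
    have h3 : (k+1 : ℕ) ≤ k := by exact_mod_cast h2
    omega
  have hcard : Fintype.card V + 1 ≤ (t.ht + 1) ^ (k+1) := by
    have := TT.card_le t (k+1) t.ht hnf le_rfl
    rwa [hlab, Finset.card_val, Finset.card_univ] at this
  -- nodup of labels along the long path
  have hnod : ((TT.longPath t).map Prod.fst).Nodup := by
    have h1 : (↑((TT.longPath t).map Prod.fst) : Multiset V) ≤ TT.labels t := TT.map_fst_le t
    rw [hlab] at h1
    exact Multiset.coe_nodup.mp (Multiset.nodup_of_le h1 Finset.univ.nodup)
  set L := TT.longPath t with hL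
  have hsplit : (L.filter (fun p => p.2 = false)).length
      + (L.filter (fun p => p.2 = true)).length = L.length := by
    induction L with
    | nil => simp
    | cons a l ih =>
      rcases Bool.eq_false_or_eq_true a.2 with h | h <;>
        simp [List.filter_cons, h] at ih ⊢ <;> omega
  obtain ⟨b, hb⟩ : ∃ b : Bool, L.length ≤ 2 * (L.filter (fun p => p.2 = b)).length := by
    rcases le_total (L.filter (fun p => p.2 = false)).length
        (L.filter (fun p => p.2 = true)).length with h | h
    · exact ⟨true, by omega⟩
    · exact ⟨false, by omega⟩
  set Lb := L.filter (fun p => p.2 = b) with hLb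
  have hsub : Lb.Sublist L := List.filter_sublist
  have hnodb : (Lb.map Prod.fst).Nodup := hnod.sublist (hsub.map _)
  refine ⟨(Lb.map Prod.fst).toFinset, ?_, ?_⟩
  · -- cardinality bound
    have hcardeq : (Lb.map Prod.fst).toFinset.card = Lb.length := by
      rw [List.toFinset_card_of_nodup hnodb, List.length_map]
    have hlen : L.length = t.ht := by rw [hL, TT.longPath_length]
    have h0 : (Fintype.card V : ℝ) ≤ ((t.ht + 1 : ℕ) : ℝ) ^ ((k+1 : ℕ)) := by
      exact_mod_cast Nat.le_of_succ_le hcard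
    have h1 : (Fintype.card V : ℝ) ^ ((1 : ℝ) / (k + 1)) ≤ ((t.ht + 1 : ℕ) : ℝ) := by
      have h2 := Real.rpow_le_rpow (by positivity) h0 (by positivity : (0:ℝ) ≤ 1 / (k+1))
      calc (Fintype.card V : ℝ) ^ ((1 : ℝ) / (k + 1))
          ≤ (((t.ht + 1 : ℕ) : ℝ) ^ ((k+1 : ℕ))) ^ ((1 : ℝ) / (k + 1)) := h2
        _ = ((t.ht + 1 : ℕ) : ℝ) := by
            rw [← Real.rpow_natCast ((t.ht + 1 : ℕ) : ℝ) (k+1),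
              ← Real.rpow_mul (by positivity)]
            rw [show ((k+1 : ℕ) : ℝ) * ((1 : ℝ) / (k + 1)) = 1 by push_cast; field_simp]
            exact Real.rpow_one _
    have hlb : (t.ht : ℝ) ≤ 2 * ((Lb.map Prod.fst).toFinset.card : ℝ) := by
      rw [hcardeq]
      exact_mod_cast (hlen ▸ hb)
    push_cast at h1
    linarith
  · -- clique or independent set
    have hpw := (TT.longPath_pairwise G t hc).sublist hsub
    have hmemb : ∀ p ∈ Lb, p.2 = b := by
      intro p hp
      have := List.of_mem_filter hp
      simpa using this
    cases b with
    | false =>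
      left
      have hadj : (Lb.map Prod.fst).Pairwise G.Adj := by
        rw [List.pairwise_map]
        refine hpw.imp_of_mem ?_
        intro p q hp _ hr
        exact hr.1 (hmemb p hp)
      intro a ha c hcc hne
      rw [Finset.mem_coe, List.mem_toFinset] at ha hcc
      haveI := G.symm
      exact hadj.forall ha hcc hne
    | true =>
      right
      have hadj : (Lb.map Prod.fst).Pairwise (fun a c => ¬ G.Adj a c) := by
        rw [List.pairwise_map]
        refine hpw.imp_of_mem ?_
        intro p q hp _ hr
        exact hr.2 (hmemb p hp)
      intro a ha c hcc hne
      rw [Finset.mem_coe, List.mem_toFinset] at ha hcc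
      have hsymm : Symmetric (fun a c : V => ¬ G.Adj a c) := fun x y h hadj' => h hadj'.symm
      haveI : Std.Symm (fun a c : V => ¬ G.Adj a c) := ⟨fun x y h => hsymm h⟩
      exact hadj.forall ha hcc hne
end
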